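/- Let L > 1 and ε ∈ (0,1]. Then for every continuously differentiable function v : ℝ → ℝ with v(−π/2) = v(π/2) = 0 and v(x) ≥ 0 for all x ∈ [−π/2, π/2], one has ∫_{−π/2}^{π/2} u_{ε,L}'(x)·v'(x) dx ≥ (1/L²)·∫_{−π/2}^{π/2} u_{ε,L}(x)·v(x) dx, where u_{ε,L}' denotes the derivative of u_{ε,L} (taken to be 0 at the finitely many points where u_{ε,L} is not differentiable). That is, u_{ε,L} is a weak supersolution of −u'' = (1/L²)u on (−π/2, π/2). -/

import Mathlib

/-!
On `[0, π/2]` the difference `ε cos (x / L) - cos x` is strictly increasing and changes sign,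
so the two branches cross at a single `a`: `u = cos (x / L)` on `[-a, a]` and `u = cos x / ε`
on the rest of `[-π/2, π/2]`. Integrating by parts on the three pieces, each branch is a
classical supersolution of `-w'' ≥ w / L²` (the outer one because `cos ≥ 0` there and
`1 / L² ≤ 1`), and the boundary terms at `±a` add up to
`(sin a / ε - sin (a / L) / L) (v a + v (-a)) ≥ 0`: the kinks of `u` are concave.
-/

open Real Set MeasureTheory intervalIntegral

theorem deriv_min_of_lt {f g : ℝ → ℝ} {x : ℝ} (hf : ContinuousAt f x)
    (hg : ContinuousAt g x) (h : f x < g x) : deriv (fun y => min (f y) (g y)) x = deriv f x :=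
  Filter.EventuallyEq.deriv_eq <| (hf.eventually_lt hg h).mono fun _ hy => min_eq_left hy.le

theorem deriv_min_of_gt {f g : ℝ → ℝ} {x : ℝ} (hf : ContinuousAt f x)
    (hg : ContinuousAt g x) (h : g x < f x) : deriv (fun y => min (f y) (g y)) x = deriv g x :=
  Filter.EventuallyEq.deriv_eq <| (hg.eventually_lt hf h).mono fun _ hy => min_eq_right hy.le

section IntegrationByParts

variable {u f f' f'' v : ℝ → ℝ} {s t : ℝ}

theorem intervalIntegrable_deriv_mul_deriv (hst : s ≤ t) (hu' : EqOn (deriv u) f' (Ioo s t))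
    (hf' : ContinuousOn f' (Icc s t)) (hv : ContDiff ℝ 1 v) :
    IntervalIntegrable (fun x => deriv u x * deriv v x) volume s t := by
  have hcont : ContinuousOn (fun x => f' x * deriv v x) (Icc s t) :=
    hf'.mul (hv.continuous_deriv le_rfl).continuousOn
  refine (hcont.intervalIntegrable_of_Icc hst).congr_uIoo ?_
  rw [uIoo_of_le hst]
  exact fun x hx => congrArg (· * deriv v x) (hu' hx).symm

theorem integral_deriv_mul_deriv_eq (hst : s ≤ t) (hu' : EqOn (deriv u) f' (Ioo s t))
    (hf' : ∀ x ∈ Icc s t, HasDerivAt f' (f'' x) x) (hf'' : IntervalIntegrable f'' volume s t)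
    (hv : ContDiff ℝ 1 v) :
    ∫ x in s..t, deriv u x * deriv v x =
      f' t * v t - f' s * v s - ∫ x in s..t, f'' x * v x := by
  rw [integral_congr_Ioo_of_le hst fun x hx => congrArg (· * deriv v x) (hu' hx)]
  exact integral_mul_deriv_eq_deriv_mul (fun x hx => hf' x (uIcc_of_le hst ▸ hx))
    (fun x _ => (hv.differentiable one_ne_zero x).hasDerivAt) hf''
    ((hv.continuous_deriv le_rfl).intervalIntegrable _ _)

theorem le_integral_deriv_mul_deriv_of_supersolution {c : ℝ} (hst : s ≤ t)
    (hf : ContinuousOn f (Icc s t)) (hu : EqOn u f (Icc s t)) (hu' : EqOn (deriv u) f' (Ioo s t))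
    (hf' : ∀ x ∈ Icc s t, HasDerivAt f' (f'' x) x) (hf'' : IntervalIntegrable f'' volume s t)
    (hsuper : ∀ x ∈ Icc s t, c * f x ≤ -f'' x) (hv : ContDiff ℝ 1 v)
    (hv0 : ∀ x ∈ Icc s t, 0 ≤ v x) :
    c * (∫ x in s..t, u x * v x) + (f' t * v t - f' s * v s) ≤
      ∫ x in s..t, deriv u x * deriv v x := by
  have hfv : IntervalIntegrable (fun x => c * (f x * v x)) volume s t :=
    ((hf.mul hv.continuous.continuousOn).intervalIntegrable_of_Icc hst).const_mul c
  have hf''v : IntervalIntegrable (fun x => -(f'' x * v x)) volume s t :=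
    (hf''.mul_continuousOn hv.continuous.continuousOn).neg
  have hmono := integral_mono_on hst hfv hf''v fun x hx =>
    by nlinarith [hsuper x hx, hv0 x hx]
  rw [intervalIntegral.integral_const_mul, intervalIntegral.integral_neg] at hmono
  have hufv : ∫ x in s..t, u x * v x = ∫ x in s..t, f x * v x :=
    integral_congr fun x hx => congrArg (· * v x) (hu (uIcc_of_le hst ▸ hx))
  rw [integral_deriv_mul_deriv_eq hst hu' hf' hf'' hv, hufv]
  linarith

end IntegrationByParts

theorem lt_abs_of_mem_Ioo {a s t x : ℝ} (hout : t ≤ -a ∨ a ≤ s) (hx : x ∈ Ioo s t) :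
    a < |x| := by
  rcases hout with h | h
  · exact lt_abs.2 (Or.inr (by linarith [hx.2]))
  · exact lt_abs.2 (Or.inl (by linarith [hx.1]))

theorem le_abs_of_mem_Icc {a s t x : ℝ} (hout : t ≤ -a ∨ a ≤ s) (hx : x ∈ Icc s t) :
    a ≤ |x| := by
  rcases hout with h | h
  · exact le_abs.2 (Or.inr (by linarith [hx.2]))
  · exact le_abs.2 (Or.inl (by linarith [hx.1]))

theorem cos_abs_div (x L : ℝ) : cos (|x| / L) = cos (x / L) := by
  rcases abs_choice x with h | h <;> simp only [h, neg_div, cos_neg]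

noncomputable def minCos (L ε x : ℝ) : ℝ := min (cos (x / L)) (1 / ε * cos x)

section MinCos

variable {L ε a x s t : ℝ} {v : ℝ → ℝ}

theorem strictMonoOn_mul_cos_div_sub_cos (hL : 1 < L) (hεL : ε ≤ L) :
    StrictMonoOn (fun x => ε * cos (x / L) - cos x) (Icc 0 (π / 2)) := by
  have hL0 : 0 < L := by linarith
  refine strictMonoOn_of_deriv_pos (convex_Icc _ _) (by fun_prop) fun x hx => ?_
  rw [interior_Icc] at hx
  have hderiv : HasDerivAt (fun x => ε * cos (x / L) - cos x)
      (sin x - ε / L * sin (x / L)) x := by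
    refine ((((hasDerivAt_id' x).div_const L).cos.const_mul ε).sub
      (hasDerivAt_cos x)).congr_deriv ?_
    ring
  have hxL : x / L < x := div_lt_self hx.1 hL
  have hxL0 : 0 < x / L := div_pos hx.1 hL0
  have hsin_lt : sin (x / L) < sin x :=
    strictMonoOn_sin ⟨by linarith [pi_pos], by linarith [hx.2]⟩
      ⟨by linarith [pi_pos], hx.2.le⟩ hxL
  have hsin_nonneg : 0 ≤ sin (x / L) :=
    sin_nonneg_of_nonneg_of_le_pi hxL0.le (by linarith [pi_pos, hx.2])
  have hεL' : ε / L ≤ 1 := div_le_one_of_le₀ hεL hL0.le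
  rw [hderiv.deriv]
  nlinarith

theorem exists_mul_cos_div_eq_cos (hL : 1 < L) (hε₀ : 0 < ε) (hε₁ : ε ≤ 1) :
    ∃ a ∈ Icc 0 (π / 2), ε * cos (a / L) = cos a := by
  have h0 : ε * cos (0 / L) - cos 0 ≤ 0 := by simpa using hε₁
  have hπ : 0 ≤ ε * cos (π / 2 / L) - cos (π / 2) := by
    rw [cos_pi_div_two, sub_zero]
    refine mul_nonneg hε₀.le (cos_nonneg_of_mem_Icc ⟨?_, ?_⟩)
    · linarith [pi_div_two_pos, div_pos pi_div_two_pos (by linarith : (0 : ℝ) < L)]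
    · exact div_le_self pi_div_two_pos.le hL.le
  obtain ⟨a, ha, hga⟩ := intermediate_value_Icc pi_div_two_pos.le
    (by fun_prop : Continuous fun x => ε * cos (x / L) - cos x).continuousOn ⟨h0, hπ⟩
  exact ⟨a, ha, sub_eq_zero.mp hga⟩

theorem cos_div_lt_one_div_mul_cos_iff (hL : 1 < L) (hε₀ : 0 < ε) (hεL : ε ≤ L)
    (ha : a ∈ Icc 0 (π / 2)) (hcross : ε * cos (a / L) = cos a) (hx : |x| ≤ π / 2) :
    cos (x / L) < 1 / ε * cos x ↔ |x| < a := by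
  have hmono := strictMonoOn_mul_cos_div_sub_cos hL hεL
  rw [← hmono.lt_iff_lt ⟨abs_nonneg x, hx⟩ ha]
  show _ ↔ ε * cos (|x| / L) - cos |x| < ε * cos (a / L) - cos a
  rw [cos_abs_div, cos_abs, hcross, sub_self, sub_neg, one_div, inv_mul_eq_div,
    lt_div_iff₀ hε₀, mul_comm]

theorem cos_div_le_one_div_mul_cos_iff (hL : 1 < L) (hε₀ : 0 < ε) (hεL : ε ≤ L)
    (ha : a ∈ Icc 0 (π / 2)) (hcross : ε * cos (a / L) = cos a) (hx : |x| ≤ π / 2) :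
    cos (x / L) ≤ 1 / ε * cos x ↔ |x| ≤ a := by
  have hmono := strictMonoOn_mul_cos_div_sub_cos hL hεL
  rw [← hmono.le_iff_le ⟨abs_nonneg x, hx⟩ ha]
  show _ ↔ ε * cos (|x| / L) - cos |x| ≤ ε * cos (a / L) - cos a
  rw [cos_abs_div, cos_abs, hcross, sub_self, sub_nonpos, one_div, inv_mul_eq_div,
    le_div_iff₀ hε₀, mul_comm]

theorem minCos_eq_of_abs_le (hL : 1 < L) (hε₀ : 0 < ε) (hεL : ε ≤ L)
    (ha : a ∈ Icc 0 (π / 2)) (hcross : ε * cos (a / L) = cos a) (hx : |x| ≤ a) :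
    minCos L ε x = cos (x / L) :=
  min_eq_left <| (cos_div_le_one_div_mul_cos_iff hL hε₀ hεL ha hcross (hx.trans ha.2)).2 hx

theorem minCos_eq_of_le_abs (hL : 1 < L) (hε₀ : 0 < ε) (hεL : ε ≤ L)
    (ha : a ∈ Icc 0 (π / 2)) (hcross : ε * cos (a / L) = cos a) (hx : a ≤ |x|)
    (hx' : |x| ≤ π / 2) :
    minCos L ε x = 1 / ε * cos x :=
  min_eq_right <| not_lt.1 fun h =>
    (not_lt.2 hx) ((cos_div_lt_one_div_mul_cos_iff hL hε₀ hεL ha hcross hx').1 h)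

theorem deriv_minCos_of_abs_lt (hL : 1 < L) (hε₀ : 0 < ε) (hεL : ε ≤ L)
    (ha : a ∈ Icc 0 (π / 2)) (hcross : ε * cos (a / L) = cos a) (hx : |x| < a) :
    deriv (minCos L ε) x = -sin (x / L) / L := by
  have hlt := (cos_div_lt_one_div_mul_cos_iff hL hε₀ hεL ha hcross (hx.le.trans ha.2)).2 hx
  refine (deriv_min_of_lt (by fun_prop) (by fun_prop) hlt).trans (HasDerivAt.deriv ?_)
  exact ((hasDerivAt_id' x).div_const L).cos.congr_deriv (by ring)

theorem deriv_minCos_of_lt_abs (hL : 1 < L) (hε₀ : 0 < ε) (hεL : ε ≤ L)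
    (ha : a ∈ Icc 0 (π / 2)) (hcross : ε * cos (a / L) = cos a) (hx : a < |x|)
    (hx' : |x| ≤ π / 2) : deriv (minCos L ε) x = -sin x / ε := by
  have hlt : 1 / ε * cos x < cos (x / L) := lt_of_not_ge fun h =>
    not_le.2 hx ((cos_div_le_one_div_mul_cos_iff hL hε₀ hεL ha hcross hx').1 h)
  refine (deriv_min_of_gt (by fun_prop) (by fun_prop) hlt).trans (HasDerivAt.deriv ?_)
  exact ((hasDerivAt_cos x).const_mul (1 / ε)).congr_deriv (by ring)

theorem intervalIntegrable_deriv_minCos_mul_deriv_inner (hL : 1 < L) (hε₀ : 0 < ε)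
    (hεL : ε ≤ L) (ha : a ∈ Icc 0 (π / 2)) (hcross : ε * cos (a / L) = cos a)
    (hv : ContDiff ℝ 1 v) :
    IntervalIntegrable (fun x => deriv (minCos L ε) x * deriv v x) volume (-a) a :=
  intervalIntegrable_deriv_mul_deriv (by linarith [ha.1])
    (fun x hx => deriv_minCos_of_abs_lt hL hε₀ hεL ha hcross (abs_lt.2 hx)) (by fun_prop) hv

theorem le_integral_deriv_minCos_mul_deriv_inner (hL : 1 < L) (hε₀ : 0 < ε) (hεL : ε ≤ L)
    (ha : a ∈ Icc 0 (π / 2)) (hcross : ε * cos (a / L) = cos a) (hv : ContDiff ℝ 1 v)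
    (hv0 : ∀ x ∈ Icc (-(π / 2)) (π / 2), 0 ≤ v x) :
    1 / L ^ 2 * (∫ x in -a..a, minCos L ε x * v x) - sin (a / L) / L * (v a + v (-a)) ≤
      ∫ x in -a..a, deriv (minCos L ε) x * deriv v x := by
  have h := le_integral_deriv_mul_deriv_of_supersolution (u := minCos L ε) (c := 1 / L ^ 2)
    (f := fun x => cos (x / L)) (f'' := fun x => -cos (x / L) / L ^ 2)
    (by linarith [ha.1]) (by fun_prop)
    (fun x hx => minCos_eq_of_abs_le hL hε₀ hεL ha hcross (abs_le.2 hx))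
    (fun x hx => deriv_minCos_of_abs_lt hL hε₀ hεL ha hcross (abs_lt.2 hx))
    (fun x _ => (((hasDerivAt_id' x).div_const L).sin.neg.div_const L).congr_deriv (by ring))
    ((by fun_prop : Continuous _).intervalIntegrable _ _) (fun x _ => le_of_eq (by ring)) hv
    (fun x hx => hv0 x ⟨by linarith [hx.1, ha.2], by linarith [hx.2, ha.2]⟩)
  rw [neg_div L a, sin_neg] at h
  convert h using 1
  ring

theorem intervalIntegrable_deriv_minCos_mul_deriv_outer (hL : 1 < L) (hε₀ : 0 < ε)
    (hεL : ε ≤ L) (ha : a ∈ Icc 0 (π / 2)) (hcross : ε * cos (a / L) = cos a)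
    (hs : -(π / 2) ≤ s) (hst : s ≤ t) (ht : t ≤ π / 2) (hout : t ≤ -a ∨ a ≤ s)
    (hv : ContDiff ℝ 1 v) :
    IntervalIntegrable (fun x => deriv (minCos L ε) x * deriv v x) volume s t :=
  intervalIntegrable_deriv_mul_deriv hst
    (fun x hx => deriv_minCos_of_lt_abs hL hε₀ hεL ha hcross (lt_abs_of_mem_Ioo hout hx)
      (abs_le.2 ⟨by linarith [hx.1], by linarith [hx.2]⟩)) (by fun_prop) hv

theorem le_integral_deriv_minCos_mul_deriv_outer (hL : 1 < L) (hε₀ : 0 < ε) (hεL : ε ≤ L)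
    (ha : a ∈ Icc 0 (π / 2)) (hcross : ε * cos (a / L) = cos a)
    (hs : -(π / 2) ≤ s) (hst : s ≤ t) (ht : t ≤ π / 2) (hout : t ≤ -a ∨ a ≤ s)
    (hv : ContDiff ℝ 1 v) (hv0 : ∀ x ∈ Icc (-(π / 2)) (π / 2), 0 ≤ v x) :
    1 / L ^ 2 * (∫ x in s..t, minCos L ε x * v x) + (sin s * v s - sin t * v t) / ε ≤
      ∫ x in s..t, deriv (minCos L ε) x * deriv v x := by
  have hIcc : ∀ x ∈ Icc s t, x ∈ Icc (-(π / 2)) (π / 2) := fun x hx =>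
    ⟨by linarith [hx.1], by linarith [hx.2]⟩
  have hsuper : ∀ x ∈ Icc s t, 1 / L ^ 2 * (1 / ε * cos x) ≤ -(-cos x / ε) := by
    intro x hx
    have hcos : 0 ≤ 1 / ε * cos x :=
      mul_nonneg (by positivity) (cos_nonneg_of_mem_Icc (hIcc x hx))
    have hL2 : 1 / L ^ 2 ≤ 1 := by rw [div_le_one (by positivity)]; nlinarith
    calc 1 / L ^ 2 * (1 / ε * cos x) ≤ 1 / ε * cos x := mul_le_of_le_one_left hcos hL2
      _ = -(-cos x / ε) := by ring
  have h := le_integral_deriv_mul_deriv_of_supersolution (u := minCos L ε) (c := 1 / L ^ 2)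
    (f := fun x => 1 / ε * cos x) (f'' := fun x => -cos x / ε) hst (by fun_prop)
    (fun x hx => minCos_eq_of_le_abs hL hε₀ hεL ha hcross (le_abs_of_mem_Icc hout hx)
      (abs_le.2 (hIcc x hx)))
    (fun x hx => deriv_minCos_of_lt_abs hL hε₀ hεL ha hcross (lt_abs_of_mem_Ioo hout hx)
      (abs_le.2 (hIcc x (Ioo_subset_Icc_self hx))))
    (fun x _ => (hasDerivAt_sin x).neg.div_const ε)
    ((by fun_prop : Continuous _).intervalIntegrable _ _) hsuper hv
    (fun x hx => hv0 x (hIcc x hx))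
  convert h using 1
  ring

theorem sin_div_div_le_one_div_mul_sin (hL : 1 ≤ L) (hε₀ : 0 < ε) (hεL : ε ≤ L)
    (ha : a ∈ Icc 0 (π / 2)) : sin (a / L) / L ≤ 1 / ε * sin a := by
  have haL : a / L ≤ a := div_le_self ha.1 hL
  have haL0 : 0 ≤ a / L := div_nonneg ha.1 (by linarith)
  have hsin0 : 0 ≤ sin (a / L) := sin_nonneg_of_nonneg_of_le_pi haL0 (by linarith [ha.2, pi_pos])
  have hsin : sin (a / L) ≤ sin a := strictMonoOn_sin.monotoneOn
    ⟨by linarith [pi_pos], by linarith [ha.2]⟩ ⟨by linarith [ha.1, pi_pos], ha.2⟩ haL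
  calc sin (a / L) / L ≤ sin (a / L) / ε := div_le_div_of_nonneg_left hsin0 hε₀ hεL
    _ ≤ sin a / ε := div_le_div_of_nonneg_right hsin hε₀.le
    _ = 1 / ε * sin a := by ring

end MinCos

/-- For `L > 1` and `ε ∈ (0,1]`, the function
`u_{ε,L}(x) = min(cos(x/L), (1/ε)·cos x)` is a weak supersolution of
`−u'' = (1/L²)u` on `(−π/2, π/2)`: testing against any nonnegative `C¹` function
vanishing at `±π/2` gives `∫ u' v' ≥ (1/L²) ∫ u v`. -/
theorem stmt_13 (L ε : ℝ) (hL : 1 < L) (hε₀ : 0 < ε) (hε₁ : ε ≤ 1)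
    (u : ℝ → ℝ)
    (hu : u = fun x => min (Real.cos (x / L)) ((1 / ε) * Real.cos x)) :
    ∀ v : ℝ → ℝ, ContDiff ℝ 1 v →
      v (-(π / 2)) = 0 → v (π / 2) = 0 →
      (∀ x ∈ Set.Icc (-(π / 2)) (π / 2), 0 ≤ v x) →
      (∫ x in (-(π / 2))..(π / 2), deriv u x * deriv v x) ≥
        (1 / L ^ 2) * ∫ x in (-(π / 2))..(π / 2), u x * v x := by
  intro v hv hvl hvr hvnn
  obtain rfl : u = minCos L ε := hu
  have hεL : ε ≤ L := by linarith
  obtain ⟨a, ha, hcross⟩ := exists_mul_cos_div_eq_cos hL hε₀ hε₁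
  have hpa : a ∈ Icc (-(π / 2)) (π / 2) := ⟨by linarith [ha.1, pi_pos], ha.2⟩
  have hpma : -a ∈ Icc (-(π / 2)) (π / 2) :=
    ⟨by linarith [ha.2], by linarith [ha.1, pi_pos]⟩
  have hleft := le_integral_deriv_minCos_mul_deriv_outer hL hε₀ hεL ha hcross le_rfl hpma.1
    hpma.2 (Or.inl le_rfl) hv hvnn
  have hmid := le_integral_deriv_minCos_mul_deriv_inner hL hε₀ hεL ha hcross hv hvnn
  have hright := le_integral_deriv_minCos_mul_deriv_outer hL hε₀ hεL ha hcross hpa.1 hpa.2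
    le_rfl (Or.inr le_rfl) hv hvnn
  have hI₁ := intervalIntegrable_deriv_minCos_mul_deriv_outer hL hε₀ hεL ha hcross le_rfl
    hpma.1 hpma.2 (Or.inl le_rfl) hv
  have hI₂ := intervalIntegrable_deriv_minCos_mul_deriv_inner hL hε₀ hεL ha hcross hv
  have hI₃ := intervalIntegrable_deriv_minCos_mul_deriv_outer hL hε₀ hεL ha hcross hpa.1 hpa.2
    le_rfl (Or.inr le_rfl) hv
  have huv : ∀ s t, IntervalIntegrable (fun x => minCos L ε x * v x) volume s t := fun s t =>
    (show Continuous fun x => minCos L ε x * v x by unfold minCos; fun_prop).intervalIntegrable s t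
  have hjump := sin_div_div_le_one_div_mul_sin hL.le hε₀ hεL ha
  rw [ge_iff_le, ← integral_add_adjacent_intervals (hI₁.trans hI₂) hI₃,
    ← integral_add_adjacent_intervals hI₁ hI₂,
    ← integral_add_adjacent_intervals (huv _ a) (huv a _),
    ← integral_add_adjacent_intervals (huv _ (-a)) (huv (-a) a)]
  rw [hvl, sin_neg a] at hleft
  rw [hvr] at hright
  linear_combination hleft + hmid + hright +
    mul_nonneg (sub_nonneg.2 hjump) (add_nonneg (hvnn a hpa) (hvnn (-a) hpma))
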